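/- arXiv:2008.13629 — 5 statements merged into one kernel-verified Lean document; each statement's English description precedes it below -/
import Mathlib

section
/- CVaR truncation bias bound: let X be a random variable with continuous strictly increasing CDF satisfying E[|X|^p] ≤ B for p > 1, and let X^{(b)} = min(max(−b, X), b) for b > |v_α(X)|. Then 0 ≤ c_α(X) − c_α(X^{(b)}) ≤ B / (β b^{p−1}), where β = 1−α. -/
open MeasureTheory

/-- CVaR truncation bias bound: let `X` have continuous strictly increasing
CDF (so `c_α(X) = (1/β) E[X · 1{X ≥ v}]` with `v = v_α(X)` and `P(X ≥ v) = β = 1 - α`),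
`E[|X|^p] ≤ B` for `p > 1`, and let `X⁽ᵇ⁾ = min(max(-b, X), b)` for `b > |v_α(X)|`.
Then `0 ≤ c_α(X) - c_α(X⁽ᵇ⁾) ≤ B / (β b^(p-1))`. -/
theorem cvar_truncation_bias
    {Ω : Type*} [MeasurableSpace Ω] (μ : Measure Ω) [IsProbabilityMeasure μ]
    (X : Ω → ℝ) (hXmeas : Measurable X) (hXint : Integrable X μ)
    (p B α β v b : ℝ) (hp : 1 < p)
    (hα : α ∈ Set.Ioo (0 : ℝ) 1) (hβ : β = 1 - α)
    (hmom_int : Integrable (fun ω => |X ω| ^ p) μ)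
    (hmom : ∫ ω, |X ω| ^ p ∂μ ≤ B)
    (hv : μ {ω | v ≤ X ω} = ENNReal.ofReal β)
    (hb : |v| < b) :
    0 ≤ (1 / β) * (∫ ω in {ω | v ≤ X ω}, X ω ∂μ) -
        (1 / β) * (∫ ω in {ω | v ≤ min (max (-b) (X ω)) b}, min (max (-b) (X ω)) b ∂μ) ∧
    (1 / β) * (∫ ω in {ω | v ≤ X ω}, X ω ∂μ) -
        (1 / β) * (∫ ω in {ω | v ≤ min (max (-b) (X ω)) b}, min (max (-b) (X ω)) b ∂μ)
      ≤ B / (β * b ^ (p - 1)) := by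
  have hβpos : 0 < β := by rw [hβ]; linarith [hα.2]
  have hbpos : 0 < b := lt_of_le_of_lt (abs_nonneg v) hb
  have hvb := abs_lt.mp hb
  set Y : Ω → ℝ := fun ω => min (max (-b) (X ω)) b with hY
  have hYmeas : Measurable Y := (measurable_const.max hXmeas).min measurable_const
  have hsets : {ω | v ≤ Y ω} = {ω | v ≤ X ω} := by
    ext ω
    simp only [hY, Set.mem_setOf_eq, le_min_iff, le_max_iff]
    constructor
    · rintro ⟨h1 | h1, _⟩
      · linarith [hvb.1]
      · exact h1
    · intro h
      exact ⟨Or.inr h, le_of_lt hvb.2⟩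
  have hYint : Integrable Y μ := by
    refine hXint.mono hYmeas.aestronglyMeasurable (ae_of_all _ fun ω => ?_)
    simp only [Real.norm_eq_abs, hY]
    rw [abs_le]
    constructor
    · refine le_min (le_trans (neg_abs_le _) (le_max_right _ _)) ?_
      have := abs_nonneg (X ω); linarith
    · refine le_trans (min_le_left _ _) (max_le ?_ (le_abs_self _))
      have := abs_nonneg (X ω); linarith
  set S := {ω | v ≤ X ω} with hS
  have hSmeas : MeasurableSet S := measurableSet_le measurable_const hXmeas
  have hXS : IntegrableOn X S μ := hXint.integrableOn
  have hYS : IntegrableOn Y S μ := hYint.integrableOn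
  have hdiff : (∫ ω in S, X ω ∂μ) - (∫ ω in S, Y ω ∂μ) = ∫ ω in S, (X ω - Y ω) ∂μ :=
    (integral_sub hXS hYS).symm
  have hb1pos : 0 < b ^ (p - 1) := Real.rpow_pos_of_pos hbpos _
  have hpt0 : ∀ ω ∈ S, 0 ≤ X ω - Y ω := by
    intro ω hω
    have hvX : v ≤ X ω := hω
    simp only [hY]
    rw [max_eq_right (by linarith [hvb.1] : -b ≤ X ω)]
    rcases le_total (X ω) b with h | h
    · rw [min_eq_left h]; linarith
    · rw [min_eq_right h]; linarith
  have hpt1 : ∀ ω ∈ S, X ω - Y ω ≤ |X ω| ^ p / b ^ (p - 1) := by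
    intro ω hω
    have hvX : v ≤ X ω := hω
    have hnum : 0 ≤ |X ω| ^ p := Real.rpow_nonneg (abs_nonneg _) _
    simp only [hY]
    rw [max_eq_right (by linarith [hvb.1] : -b ≤ X ω)]
    rcases le_total (X ω) b with h | h
    · rw [min_eq_left h, sub_self]
      exact div_nonneg hnum hb1pos.le
    · rw [min_eq_right h]
      have hx0 : 0 < X ω := lt_of_lt_of_le hbpos h
      rw [le_div_iff₀ hb1pos]
      have h1 : (X ω - b) * b ^ (p - 1) ≤ X ω * b ^ (p - 1) := by
        apply mul_le_mul_of_nonneg_right _ hb1pos.le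
        linarith
      have h2 : X ω * b ^ (p - 1) ≤ X ω * (X ω) ^ (p - 1) := by
        apply mul_le_mul_of_nonneg_left _ hx0.le
        exact Real.rpow_le_rpow hbpos.le h (by linarith)
      have h3 : X ω * (X ω) ^ (p - 1) = |X ω| ^ p := by
        have h4 := Real.rpow_add hx0 1 (p - 1)
        rw [Real.rpow_one, show (1 : ℝ) + (p - 1) = p by ring] at h4
        rw [abs_of_pos hx0, h4]
      linarith
  have hdivint : Integrable (fun ω => |X ω| ^ p / b ^ (p - 1)) μ := hmom_int.div_const _
  have key : ∫ ω in S, (X ω - Y ω) ∂μ ≤ B / b ^ (p - 1) := by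
    have step1 : ∫ ω in S, (X ω - Y ω) ∂μ ≤ ∫ ω in S, |X ω| ^ p / b ^ (p - 1) ∂μ :=
      setIntegral_mono_on (hXS.sub hYS) hdivint.integrableOn hSmeas hpt1
    have step2 : ∫ ω in S, |X ω| ^ p / b ^ (p - 1) ∂μ ≤ ∫ ω, |X ω| ^ p / b ^ (p - 1) ∂μ :=
      setIntegral_le_integral hdivint (ae_of_all _ fun ω =>
        div_nonneg (Real.rpow_nonneg (abs_nonneg _) _) hb1pos.le)
    have step3 : ∫ ω, |X ω| ^ p / b ^ (p - 1) ∂μ = (∫ ω, |X ω| ^ p ∂μ) / b ^ (p - 1) :=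
      integral_div _ _
    have step4 : (∫ ω, |X ω| ^ p ∂μ) / b ^ (p - 1) ≤ B / b ^ (p - 1) := by
      gcongr
    linarith
  have hnn : 0 ≤ ∫ ω in S, (X ω - Y ω) ∂μ := setIntegral_nonneg hSmeas hpt0
  rw [hsets]
  constructor
  · rw [← mul_sub, hdiff]
    exact mul_nonneg (by positivity) hnn
  · rw [← mul_sub, hdiff]
    have heq : B / (β * b ^ (p - 1)) = (1 / β) * (B / b ^ (p - 1)) := by
      field_simp
    rw [heq]
    exact mul_le_mul_of_nonneg_left key (by positivity)
end

section
/- Centered p-th moment bound for the conditional tail distribution: let X have continuous strictly increasing CDF with E[|X−μ|^p] ≤ V and E[|X|^p] ≤ B for p ∈ (1,2], where μ = E[X]. Let X̃ be distributed as the conditional law of X given X ≥ v_α(X). Then E[|X̃ − c_α(X)|^p] ≤ 2^{p−1} V/β + 2^p B/β, where β = 1−α. -/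
open MeasureTheory

/-! Under the tail law, `c` is the average of `X` over `{v ≤ X}`, so Jensen's inequality for the
convex function `|x| ^ p` gives `β |c| ^ p ≤ ∫_{v ≤ X} |X| ^ p ≤ B`. Together with
`|X - c| ^ p ≤ 2 ^ (p - 1) (|X| ^ p + |c| ^ p)` this bounds the centered tail moment by `2 ^ p B / β`,
which is already below the claimed bound. -/

theorem abs_sub_rpow_le {p : ℝ} (hp : 1 ≤ p) (a b : ℝ) :
    |a - b| ^ p ≤ 2 ^ (p - 1) * (|a| ^ p + |b| ^ p) := by
  have h := NNReal.coe_le_coe.2 (NNReal.rpow_add_le_mul_rpow_add_rpow ‖a‖₊ ‖b‖₊ hp)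
  push_cast at h
  calc |a - b| ^ p ≤ (|a| + |b|) ^ p :=
        Real.rpow_le_rpow (abs_nonneg _) (abs_sub a b) (by linarith)
    _ ≤ 2 ^ (p - 1) * (|a| ^ p + |b| ^ p) := by simpa only [coe_nnnorm, Real.norm_eq_abs] using h

theorem convexOn_abs_rpow {p : ℝ} (hp : 1 ≤ p) : ConvexOn ℝ Set.univ (fun x : ℝ => |x| ^ p) := by
  have himage : (fun x : ℝ => |x|) '' Set.univ = Set.Ici 0 := by
    ext y
    refine ⟨?_, fun hy => ⟨y, trivial, abs_of_nonneg hy⟩⟩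
    rintro ⟨x, -, rfl⟩
    exact abs_nonneg x
  refine ConvexOn.comp (g := fun y : ℝ => y ^ p) ?_ (convexOn_norm convex_univ) ?_ <;> rw [himage]
  · exact convexOn_rpow hp
  · exact Real.monotoneOn_rpow_Ici_of_exponent_nonneg (by linarith)

section SetAverage

variable {α : Type*} [MeasurableSpace α] {μ : Measure α} {s : Set α} {f : α → ℝ} {p : ℝ}

theorem abs_setAverage_rpow_le (hp : 1 ≤ p) (h0 : μ s ≠ 0) (hs : μ s ≠ ⊤)
    (hf : IntegrableOn f s μ) (hfp : IntegrableOn (fun x => |f x| ^ p) s μ) :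
    |⨍ x in s, f x ∂μ| ^ p ≤ ⨍ x in s, |f x| ^ p ∂μ :=
  (convexOn_abs_rpow hp).map_set_average_le
    (continuous_abs.rpow_const fun _ => Or.inr (by linarith)).continuousOn isClosed_univ h0 hs
    (ae_of_all _ fun _ => trivial) hf hfp

theorem setIntegral_abs_sub_setAverage_rpow_le (hp : 1 ≤ p) (hs : μ s ≠ ⊤)
    (hf : IntegrableOn f s μ) (hfp : IntegrableOn (fun x => |f x| ^ p) s μ) :
    ∫ x in s, |f x - ⨍ y in s, f y ∂μ| ^ p ∂μ ≤ 2 ^ p * ∫ x in s, |f x| ^ p ∂μ := by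
  by_cases h0 : μ s = 0
  · simp [Measure.restrict_eq_zero.2 h0]
  set c := ⨍ y in s, f y ∂μ
  have hpos : 0 < μ.real s := ENNReal.toReal_pos h0 hs
  have hc : μ.real s * |c| ^ p ≤ ∫ x in s, |f x| ^ p ∂μ := by
    have h := abs_setAverage_rpow_le hp h0 hs hf hfp
    rw [setAverage_eq μ (fun x => |f x| ^ p), smul_eq_mul] at h
    exact (le_inv_mul_iff₀ hpos).1 h
  calc ∫ x in s, |f x - c| ^ p ∂μ
      ≤ ∫ x in s, 2 ^ (p - 1) * (|f x| ^ p + |c| ^ p) ∂μ :=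
        integral_mono_of_nonneg (ae_of_all _ fun _ => by positivity)
          ((hfp.add (integrableOn_const hs)).const_mul _)
          (ae_of_all _ fun x => abs_sub_rpow_le hp (f x) c)
    _ = 2 ^ (p - 1) * (∫ x in s, |f x| ^ p ∂μ + μ.real s * |c| ^ p) := by
        rw [integral_const_mul, integral_add hfp (integrableOn_const hs), setIntegral_const,
          smul_eq_mul]
    _ ≤ 2 ^ (p - 1) * (∫ x in s, |f x| ^ p ∂μ + ∫ x in s, |f x| ^ p ∂μ) := by gcongr
    _ = 2 ^ p * ∫ x in s, |f x| ^ p ∂μ := by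
        rw [← two_mul, ← mul_assoc, ← Real.rpow_add_one two_ne_zero, sub_add_cancel]

end SetAverage

theorem conditional_tail_centered_moment_bound_general
    {Ω : Type*} [MeasurableSpace Ω] (μ : Measure Ω)
    (X : Ω → ℝ) (hXint : Integrable X μ)
    (p B V α β v m c : ℝ) (hp : p ∈ Set.Ioc (1 : ℝ) 2)
    (hα : α ∈ Set.Ioo (0 : ℝ) 1) (hβ : β = 1 - α)
    (hmomB_int : Integrable (fun ω => |X ω| ^ p) μ)
    (hmomB : ∫ ω, |X ω| ^ p ∂μ ≤ B)
    (hmomV : ∫ ω, |X ω - m| ^ p ∂μ ≤ V)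
    (hv : μ {ω | v ≤ X ω} = ENNReal.ofReal β)
    (hc : c = (1 / β) * ∫ ω in {ω | v ≤ X ω}, X ω ∂μ) :
    (1 / β) * (∫ ω in {ω | v ≤ X ω}, |X ω - c| ^ p ∂μ)
      ≤ 2 ^ (p - 1) * V / β + 2 ^ p * B / β := by
  have hβ0 : 0 < β := by rw [hβ]; linarith [hα.2]
  set S := {ω | v ≤ X ω}
  have hSreal : μ.real S = β := by rw [measureReal_def, hv, ENNReal.toReal_ofReal hβ0.le]
  have hc_avg : c = ⨍ ω in S, X ω ∂μ := by rw [setAverage_eq, hSreal, hc, smul_eq_mul, one_div]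
  have hV : 0 ≤ V := (integral_nonneg fun _ => by positivity).trans hmomV
  have hSB : ∫ ω in S, |X ω| ^ p ∂μ ≤ B :=
    (setIntegral_le_integral hmomB_int (ae_of_all _ fun _ => by positivity)).trans hmomB
  have hmain := setIntegral_abs_sub_setAverage_rpow_le hp.1.le (hv ▸ ENNReal.ofReal_ne_top)
    hXint.integrableOn hmomB_int.integrableOn
  rw [← hc_avg] at hmain
  calc (1 / β) * ∫ ω in S, |X ω - c| ^ p ∂μ ≤ (1 / β) * (2 ^ p * B) := by
        gcongr
        exact hmain.trans (by gcongr)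
    _ = 2 ^ p * B / β := by ring
    _ ≤ 2 ^ (p - 1) * V / β + 2 ^ p * B / β := le_add_of_nonneg_left (by positivity)

/-- Centered p-th moment bound for the conditional tail distribution:
let `X` have continuous strictly increasing CDF with `E[|X - m|^p] ≤ V` and
`E[|X|^p] ≤ B` for `p ∈ (1,2]`, where `m = E[X]`. Let `X̃` have the conditional law of
`X` given `X ≥ v_α(X)` (so `E[g(X̃)] = (1/β) E[g(X) 1{X ≥ v}]`). Then with
`c = c_α(X) = (1/β) E[X · 1{X ≥ v}]`,
`E[|X̃ - c|^p] = (1/β) E[|X - c|^p · 1{X ≥ v}] ≤ 2^(p-1) V/β + 2^p B/β`, `β = 1 - α`. -/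
theorem conditional_tail_centered_moment_bound
    {Ω : Type*} [MeasurableSpace Ω] (μ : Measure Ω) [IsProbabilityMeasure μ]
    (X : Ω → ℝ) (hXmeas : Measurable X) (hXint : Integrable X μ)
    (p B V α β v m c : ℝ) (hp : p ∈ Set.Ioc (1 : ℝ) 2)
    (hα : α ∈ Set.Ioo (0 : ℝ) 1) (hβ : β = 1 - α)
    (hm : m = ∫ ω, X ω ∂μ)
    (hmomB_int : Integrable (fun ω => |X ω| ^ p) μ)
    (hmomB : ∫ ω, |X ω| ^ p ∂μ ≤ B)
    (hmomV_int : Integrable (fun ω => |X ω - m| ^ p) μ)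
    (hmomV : ∫ ω, |X ω - m| ^ p ∂μ ≤ V)
    (hv : μ {ω | v ≤ X ω} = ENNReal.ofReal β)
    (hc : c = (1 / β) * ∫ ω in {ω | v ≤ X ω}, X ω ∂μ) :
    (1 / β) * (∫ ω in {ω | v ≤ X ω}, |X ω - c| ^ p ∂μ)
      ≤ 2 ^ (p - 1) * V / β + 2 ^ p * B / β :=
  conditional_tail_centered_moment_bound_general μ X hXint p B V α β v m c hp hα hβ hmomB_int hmomB
    hmomV hv hc
end

section
/- If L : (0,∞) → (0,∞) is slowly varying, then lim_{x→∞} x^ρ L(x) = 0 for ρ < 0 and lim_{x→∞} x^ρ L(x) = ∞ for ρ > 0. -/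
/-!
Put `h t = log L (exp t)`; slow variation of `L` says `h (t + s) - h t → 0` for each `s`.
For measurable `h` this convergence is uniform in `s ∈ [0, 1]` (the uniform convergence theorem,
via Egorov's theorem). Uniformity gives `h t - h ⌊t⌋ → 0`, and telescoping over unit steps gives
`h n = o(n)`. Hence `log L(x) = o(log x)`, so `log (x ^ ρ * L x) ~ ρ log x`, which tends to
`-∞` or `+∞` according to the sign of `ρ`.
-/

open Filter Asymptotics MeasureTheory Set

theorem isLittleO_natCast_of_tendsto_succ_sub {E : Type*} [NormedAddCommGroup E] {u : ℕ → E}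
    (hu : Tendsto (fun n => u (n + 1) - u n) atTop (nhds 0)) :
    u =o[atTop] fun n => (n : ℝ) := by
  have hsum : (fun n => u n - u 0) =o[atTop] fun n => (n : ℝ) := by
    simpa only [Finset.sum_range_sub] using isLittleO_sum_range_of_tendsto_zero hu
  have hconst : (fun _ => u 0) =o[atTop] fun n : ℕ => (n : ℝ) :=
    (isLittleO_const_id_atTop (u 0)).comp_tendsto tendsto_natCast_atTop_atTop
  simpa using hsum.add hconst

def IsAddSlowlyVarying (h : ℝ → ℝ) : Prop :=
  ∀ s, Tendsto (fun t => h (t + s) - h t) atTop (nhds 0)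

namespace IsAddSlowlyVarying

variable {h : ℝ → ℝ}

theorem exists_subset_Icc_tendstoUniformlyOn (hm : Measurable h) {t : ℕ → ℝ}
    (ht : Tendsto t atTop atTop) (hh : IsAddSlowlyVarying h) :
    ∃ F ⊆ Icc (0 : ℝ) 2, MeasurableSet F ∧ ENNReal.ofReal (7 / 4) ≤ volume F ∧
      TendstoUniformlyOn (fun n s => h (t n + s) - h (t n)) 0 atTop F := by
  obtain ⟨B, -, hBm, hB, hunif⟩ := tendstoUniformlyOn_of_ae_tendsto (μ := volume)
    (s := Icc (0 : ℝ) 2) (g := 0)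
    (fun n => ((hm.comp (measurable_const_add (t n))).sub_const _).stronglyMeasurable)
    stronglyMeasurable_const measurableSet_Icc measure_Icc_lt_top.ne
    (ae_of_all _ fun s _ => (hh s).comp ht) (by norm_num : (0 : ℝ) < 1 / 4)
  refine ⟨Icc 0 2 \ B, sdiff_subset, measurableSet_Icc.diff hBm, ?_, hunif⟩
  calc ENNReal.ofReal (7 / 4) = ENNReal.ofReal 2 - ENNReal.ofReal (1 / 4) := by
        rw [← ENNReal.ofReal_sub _ (by norm_num)]; norm_num
    _ ≤ volume (Icc (0 : ℝ) 2) - volume B := by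
        rw [Real.volume_Icc, sub_zero]; gcongr
    _ ≤ volume (Icc 0 2 \ B) := le_measure_sdiff

theorem tendstoUniformlyOn (hm : Measurable h) (hh : IsAddSlowlyVarying h) :
    TendstoUniformlyOn (fun t u => h (t + u) - h t) 0 atTop (Icc 0 1) := by
  rw [Metric.tendstoUniformlyOn_iff]
  by_contra! hbad
  obtain ⟨ε, hε, hfreq⟩ := hbad
  rw [frequently_atTop] at hfreq
  choose t htn u hu hbig using fun n : ℕ => hfreq n
  have ht : Tendsto t atTop atTop := tendsto_atTop_mono htn tendsto_natCast_atTop_atTop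
  have htu : Tendsto (fun n => t n + u n) atTop atTop :=
    tendsto_atTop_mono (fun n => le_add_of_nonneg_right (hu n).1) ht
  obtain ⟨F₁, hF₁, -, hF₁vol, hunif₁⟩ := exists_subset_Icc_tendstoUniformlyOn hm ht hh
  obtain ⟨F₂, hF₂, hF₂m, hF₂vol, hunif₂⟩ := exists_subset_Icc_tendstoUniformlyOn hm htu hh
  rw [Metric.tendstoUniformlyOn_iff] at hunif₁ hunif₂
  obtain ⟨n, hn₁, hn₂⟩ := ((hunif₁ _ (half_pos hε)).and (hunif₂ _ (half_pos hε))).exists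
  -- Both `F₁` and the translate `u n + F₂` fill more than half of `[0, 3]`, so they meet.
  obtain ⟨s, hs₁, hs₂⟩ : (F₁ ∩ (· + -u n) ⁻¹' F₂).Nonempty := by
    refine nonempty_inter_of_measure_lt_add volume (hF₂m.preimage (measurable_add_const _))
      (u := Icc 0 3) (fun x hx => ?_) (fun x hx => ?_) ?_
    · exact ⟨(hF₁ hx).1, (hF₁ hx).2.trans (by norm_num)⟩
    · have hx₂ : x + -u n ∈ Icc (0 : ℝ) 2 := hF₂ hx
      exact ⟨by linarith [hx₂.1, (hu n).1], by linarith [hx₂.2, (hu n).2]⟩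
    · rw [measure_preimage_add_right, Real.volume_Icc]
      calc ENNReal.ofReal (3 - 0) < ENNReal.ofReal (7 / 4) + ENNReal.ofReal (7 / 4) := by
            rw [← ENNReal.ofReal_add (by norm_num) (by norm_num)]
            exact (ENNReal.ofReal_lt_ofReal_iff (by norm_num)).2 (by norm_num)
        _ ≤ volume F₁ + volume F₂ := add_le_add hF₁vol hF₂vol
  have e₁ := hn₁ s hs₁
  have e₂ := hn₂ _ hs₂
  have e := hbig n
  simp only [Pi.zero_apply, dist_zero_left, Real.norm_eq_abs] at e₁ e₂ e
  rw [show t n + u n + (s + -u n) = t n + s by ring] at e₂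
  have := abs_sub_le (h (t n + u n)) (h (t n + s)) (h (t n))
  rw [abs_sub_comm (h (t n + u n)) (h (t n + s))] at this
  linarith

theorem tendsto_sub_floor (hm : Measurable h) (hh : IsAddSlowlyVarying h) :
    Tendsto (fun t => h t - h ⌊t⌋₊) atTop (nhds 0) := by
  rw [Metric.tendsto_nhds]
  intro ε hε
  have hunif := Metric.tendstoUniformlyOn_iff.1 (hh.tendstoUniformlyOn hm) ε hε
  filter_upwards [(tendsto_natCast_atTop_atTop.comp tendsto_nat_floor_atTop).eventually hunif,
    eventually_ge_atTop 0] with t ht ht₀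
  have := ht (t - ⌊t⌋₊) ⟨sub_nonneg.2 (Nat.floor_le ht₀), (sub_le_iff_le_add'.2
    (Nat.lt_floor_add_one t).le)⟩
  simpa [dist_comm] using this

theorem isLittleO_id (hm : Measurable h) (hh : IsAddSlowlyVarying h) : h =o[atTop] id := by
  have hfrac : (fun t => h t - h ⌊t⌋₊) =o[atTop] id :=
    (hh.tendsto_sub_floor hm).isBigO_one ℝ |>.trans_isLittleO (isLittleO_const_id_atTop 1)
  have hnat : (fun n : ℕ => h n) =o[atTop] fun n => (n : ℝ) := by
    refine isLittleO_natCast_of_tendsto_succ_sub ?_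
    simpa [Function.comp_def] using (hh 1).comp tendsto_natCast_atTop_atTop
  have hfloor : (fun t : ℝ => h ⌊t⌋₊) =o[atTop] id := by
    refine (hnat.comp_tendsto tendsto_nat_floor_atTop).trans_isBigO ?_
    refine IsBigO.of_bound 1 ?_
    filter_upwards [eventually_ge_atTop 0] with t ht
    simpa [abs_of_nonneg ht] using Nat.floor_le ht
  simpa only [sub_add_cancel] using hfrac.add hfloor

end IsAddSlowlyVarying

def IsSlowlyVarying (L : ℝ → ℝ) : Prop :=
  ∀ y > (0 : ℝ), Tendsto (fun x => L (x * y) / L x) atTop (nhds 1)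

namespace IsSlowlyVarying

variable {L : ℝ → ℝ}

theorem isAddSlowlyVarying_log_comp_exp (hLpos : ∀ x > (0 : ℝ), 0 < L x)
    (hL : IsSlowlyVarying L) : IsAddSlowlyVarying fun t => Real.log (L (Real.exp t)) := by
  intro s
  have := (Real.continuousAt_log one_ne_zero).tendsto.comp
    ((hL _ (Real.exp_pos s)).comp Real.tendsto_exp_atTop)
  rw [Real.log_one] at this
  refine this.congr fun t => ?_
  simp only [Function.comp_apply, Real.exp_add]
  exact Real.log_div (hLpos _ (by positivity)).ne' (hLpos _ (Real.exp_pos t)).ne'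

theorem isLittleO_log (hLmeas : Measurable L) (hLpos : ∀ x > (0 : ℝ), 0 < L x)
    (hL : IsSlowlyVarying L) : (fun x => Real.log (L x)) =o[atTop] Real.log := by
  refine (((hL.isAddSlowlyVarying_log_comp_exp hLpos).isLittleO_id
    (hLmeas.comp Real.measurable_exp).log).comp_tendsto Real.tendsto_log_atTop).congr' ?_ .rfl
  filter_upwards [eventually_gt_atTop 0] with x hx
  simp [Real.exp_log hx]

end IsSlowlyVarying

/-- If `L : (0,∞) → (0,∞)` is slowly varying (and measurable), then
`lim_{x→∞} x^ρ L(x) = 0` for `ρ < 0` and `lim_{x→∞} x^ρ L(x) = ∞` for `ρ > 0`. -/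
theorem slowly_varying_rpow_limit
    (L : ℝ → ℝ) (hLmeas : Measurable L) (hLpos : ∀ x > (0 : ℝ), 0 < L x)
    (hL : ∀ y > (0 : ℝ), Tendsto (fun x => L (x * y) / L x) atTop (nhds 1))
    (ρ : ℝ) :
    (ρ < 0 → Tendsto (fun x => x ^ ρ * L x) atTop (nhds 0)) ∧
    (0 < ρ → Tendsto (fun x => x ^ ρ * L x) atTop atTop) := by
  have hequiv (hρ : ρ ≠ 0) :
      (fun x => ρ * Real.log x) ~[atTop] fun x => Real.log (x ^ ρ * L x) := by
    refine IsEquivalent.symm <|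
      (((IsSlowlyVarying.isLittleO_log hLmeas hLpos hL).const_mul_right hρ).add_isEquivalent
        IsEquivalent.refl).congr_left ?_
    filter_upwards [eventually_gt_atTop 0] with x hx
    rw [Pi.add_apply, Real.log_mul (Real.rpow_pos_of_pos hx ρ).ne' (hLpos x hx).ne',
      Real.log_rpow hx, add_comm]
  have hexp : (fun x => Real.exp (Real.log (x ^ ρ * L x))) =ᶠ[atTop] fun x => x ^ ρ * L x := by
    filter_upwards [eventually_gt_atTop 0] with x hx
    exact Real.exp_log (mul_pos (Real.rpow_pos_of_pos hx ρ) (hLpos x hx))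
  refine ⟨fun hρ => ?_, fun hρ => ?_⟩
  · exact (Real.tendsto_exp_atBot.comp <| (hequiv hρ.ne).tendsto_atBot <|
      Real.tendsto_log_atTop.const_mul_atTop_of_neg hρ).congr' hexp
  · exact (Real.tendsto_exp_atTop.comp <| (hequiv hρ.ne').tendsto_atTop <|
      Real.tendsto_log_atTop.const_mul_atTop hρ).congr' hexp
end

section
/- KL divergence of the tail-inflated perturbation: let F be a distribution on ℝ with P(X > b) > 0 and define G by G(x) = χ₁ F(x) for x < b and Ḡ(x) = b^{p−0.5} F̄(x) for x ≥ b, where χ₁ = (1 − b^{p−0.5} F̄(b)) / F(b) ∈ (0,1]. Then KL(G, F) ≤ b^{p−0.5} (p − 0.5) log(b) · F̄(b). -/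
/-- KL divergence of the tail-inflated perturbation: with `Fb = F(b) ∈ (0,1]`,
`Fbar = 1 - Fb = F̄(b) > 0`, `b^(p-0.5) Fbar < 1`, `χ₁ = (1 - b^(p-0.5) Fbar)/Fb ∈ (0,1]`,
`b > 1`, and `KL(G,F) = χ₁ log χ₁ · F(b) + b^(p-0.5) log(b^(p-0.5)) · F̄(b)` (the density
`dG/dF` being `χ₁` on `(-∞,b)` and `b^(p-0.5)` on `[b,∞)`), we have
`KL(G,F) ≤ b^(p-0.5) (p - 0.5) log b · F̄(b)`. -/
theorem kl_tail_inflation_bound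
    (p b Fb Fbar χ₁ kl : ℝ)
    (hb : 1 < b)
    (hFb0 : 0 < Fb) (hFb1 : Fb ≤ 1)
    (hFbar : Fbar = 1 - Fb) (hFbarpos : 0 < Fbar)
    (hlt : b ^ (p - 0.5) * Fbar < 1)
    (hχ : χ₁ = (1 - b ^ (p - 0.5) * Fbar) / Fb)
    (hχmem : χ₁ ∈ Set.Ioc (0 : ℝ) 1)
    (hkl : kl = χ₁ * Real.log χ₁ * Fb + b ^ (p - 0.5) * Real.log (b ^ (p - 0.5)) * Fbar) :
    kl ≤ b ^ (p - 0.5) * (p - 0.5) * Real.log b * Fbar := by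
  obtain ⟨hχ0, hχ1⟩ := hχmem
  have hlog : Real.log χ₁ ≤ 0 := Real.log_nonpos hχ0.le hχ1
  have h1 : χ₁ * Real.log χ₁ * Fb ≤ 0 :=
    mul_nonpos_of_nonpos_of_nonneg (mul_nonpos_of_nonneg_of_nonpos hχ0.le hlog) hFb0.le
  have h2 : Real.log (b ^ (p - 0.5)) = (p - 0.5) * Real.log b :=
    Real.log_rpow (lt_trans one_pos hb) _
  rw [hkl, h2]
  nlinarith [h1]
end

section
/- Exponential concentration of the truncated empirical CVaR: let X₁,…,Xₙ be i.i.d. as X with continuous strictly increasing CDF, E[|X|^p] ≤ B for p > 1, and suppose the truncated empirical CVaR ĉ_{n,α}^{(b)} (the empirical CVaR of samples projected to [−b, b]) concentrates around c_α(X^{(b)}) as P(|c_α(X^{(b)}) − ĉ_{n,α}(X^{(b)})| ≥ Δ/2) ≤ 6 exp(−nβ Δ²/(176 b²)) (bounded-support CVaR concentration with range 2b). Then for b > max(|v_α(X)|, (2B/(Δβ))^{1/(p−1)}), P(|c_α(X) − ĉ_{n,α}^{(b)}(X)| ≥ Δ) ≤ 6 exp(−nβ Δ²/(176 b²)). -/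
open MeasureTheory

/-- Exponential concentration of the truncated empirical CVaR: let `X`
(on space `Ω` with law `μ`) have continuous strictly increasing CDF so that
`c_α(X) = (1/β) E[X 1{X ≥ v}]` with `μ{X ≥ v} = β = 1-α`, and `E[|X|^p] ≤ B`, `p > 1`.
Let `X⁽ᵇ⁾ = min(max(-b,X),b)` and `cXb = c_α(X⁽ᵇ⁾)`. Suppose (bounded-support CVaR
concentration) the estimator `ĉ` on sample space `Ω'` satisfies
`P'(|cXb - ĉ| ≥ Δ/2) ≤ 6 exp(-nβΔ²/(176 b²))`. Then for
`b > max(|v|, (2B/(Δβ))^(1/(p-1)))`, `P'(|c_α(X) - ĉ| ≥ Δ) ≤ 6 exp(-nβΔ²/(176 b²))`. -/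
theorem truncated_empirical_cvar_concentration
    {Ω : Type*} [MeasurableSpace Ω] (μ : Measure Ω) [IsProbabilityMeasure μ]
    {Ω' : Type*} [MeasurableSpace Ω'] (μ' : Measure Ω') [IsProbabilityMeasure μ']
    (X : Ω → ℝ) (hXmeas : Measurable X) (hXint : Integrable X μ)
    (n : ℕ) (p B α β v b Δ : ℝ) (hp : 1 < p) (hΔ : 0 < Δ)
    (hα : α ∈ Set.Ioo (0 : ℝ) 1) (hβ : β = 1 - α)
    (hmom_int : Integrable (fun ω => |X ω| ^ p) μ)
    (hmom : ∫ ω, |X ω| ^ p ∂μ ≤ B)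
    (hv : μ {ω | v ≤ X ω} = ENNReal.ofReal β)
    (hb : max |v| ((2 * B / (Δ * β)) ^ (1 / (p - 1))) < b)
    (cX cXb : ℝ)
    (hcX : cX = (1 / β) * ∫ ω in {ω | v ≤ X ω}, X ω ∂μ)
    (hcXb : cXb = (1 / β) *
      ∫ ω in {ω | v ≤ min (max (-b) (X ω)) b}, min (max (-b) (X ω)) b ∂μ)
    (chat : Ω' → ℝ) (hchatmeas : Measurable chat)
    (hconc : μ' {ω' | Δ / 2 ≤ |cXb - chat ω'|}
      ≤ ENNReal.ofReal (6 * Real.exp (-((n : ℝ) * β * Δ ^ 2 / (176 * b ^ 2))))) :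
    μ' {ω' | Δ ≤ |cX - chat ω'|}
      ≤ ENNReal.ofReal (6 * Real.exp (-((n : ℝ) * β * Δ ^ 2 / (176 * b ^ 2)))) := by
  have hβ0 : 0 < β := by rw [hβ]; linarith [hα.2]
  have hvb : |v| < b := lt_of_le_of_lt (le_max_left _ _) hb
  have hb0 : 0 < b := lt_of_le_of_lt (abs_nonneg v) hvb
  have hvb' : -b < v := by cases abs_lt.mp hvb; linarith
  have hvb'' : v ≤ b := le_of_lt (abs_lt.mp hvb).2
  have hB0 : 0 ≤ B := le_trans (integral_nonneg (fun ω => Real.rpow_nonneg (abs_nonneg _) p)) hmom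
  have hp1 : 0 < p - 1 := by linarith
  -- power inequality : 2B/(Δβ) < b^(p-1)
  have hpow : 2 * B / (Δ * β) < b ^ (p - 1) := by
    have hc0 : 0 ≤ 2 * B / (Δ * β) := by positivity
    have := Real.rpow_lt_rpow (Real.rpow_nonneg hc0 _) (lt_of_le_of_lt (le_max_right _ _) hb) hp1
    rwa [← Real.rpow_mul hc0, one_div_mul_cancel (ne_of_gt hp1), Real.rpow_one] at this
  have hbp0 : 0 < b ^ (p - 1) := Real.rpow_pos_of_pos hb0 _
  -- bias bound key : B/(β b^{p-1}) ≤ Δ/2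
  have hbias_num : B / (β * b ^ (p - 1)) ≤ Δ / 2 := by
    rw [div_le_div_iff₀ (by positivity) (by norm_num)]
    rw [div_lt_iff₀ (by positivity)] at hpow
    nlinarith
  set S : Set Ω := {ω | v ≤ X ω} with hS
  have hSmeas : MeasurableSet S := measurableSet_le measurable_const hXmeas
  set Xb : Ω → ℝ := fun ω => min (max (-b) (X ω)) b with hXbdef
  have hXbmeas : Measurable Xb := (measurable_const.max hXmeas).min measurable_const
  have hSeq : {ω | v ≤ Xb ω} = S := by
    ext ω
    simp only [hXbdef, Set.mem_setOf_eq, hS, le_min_iff, le_max_iff]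
    constructor
    · rintro ⟨h1 | h1, _⟩
      · linarith
      · exact h1
    · intro h; exact ⟨Or.inr h, hvb''⟩
  have hXbint : Integrable Xb μ := by
    refine (integrable_const b).mono' hXbmeas.aestronglyMeasurable ?_
    filter_upwards with ω
    rw [Real.norm_eq_abs, abs_le]
    constructor
    · exact le_min (le_max_left _ _) (by linarith)
    · exact min_le_right _ _
  -- pointwise bound on S
  have hptlb : ∀ ω ∈ S, Xb ω ≤ X ω := by
    intro ω hω
    have hvX : v ≤ X ω := hω
    exact min_le_of_left_le (max_le (by linarith) le_rfl)
  have hptub : ∀ ω ∈ S, X ω - Xb ω ≤ |X ω| ^ p / b ^ (p - 1) := by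
    intro ω hω
    have hvX : v ≤ X ω := hω
    have hrpos : 0 ≤ |X ω| ^ p / b ^ (p - 1) := by positivity
    rcases le_or_gt (X ω) b with h | h
    · have hXb' : Xb ω = X ω := by
        show min (max (-b) (X ω)) b = X ω
        rw [max_eq_right (by linarith), min_eq_left h]
      linarith
    · have hXb' : Xb ω = b := by
        show min (max (-b) (X ω)) b = b
        rw [max_eq_right (by linarith), min_eq_right (le_of_lt h)]
      have hx0 : 0 < |X ω| := by rw [abs_of_pos (by linarith)]; linarith
      have habs : |X ω| = X ω := abs_of_pos (by linarith)
      have h1 : b ^ (p - 1) ≤ |X ω| ^ (p - 1) :=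
        Real.rpow_le_rpow (le_of_lt hb0) (by rw [habs]; linarith) (le_of_lt hp1)
      have h2 : |X ω| * b ^ (p - 1) ≤ |X ω| ^ p := by
        have hsplit : |X ω| ^ p = |X ω| ^ ((1 : ℝ) + (p - 1)) := by ring_nf
        rw [Real.rpow_add hx0, Real.rpow_one] at hsplit
        calc |X ω| * b ^ (p - 1) ≤ |X ω| * |X ω| ^ (p - 1) :=
              mul_le_mul_of_nonneg_left h1 (abs_nonneg _)
          _ = |X ω| ^ p := hsplit.symm
      rw [hXb', le_div_iff₀ hbp0]
      nlinarith [abs_nonneg (X ω)]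
  -- difference of CVaRs
  have hcXb' : cXb = (1 / β) * ∫ ω in S, Xb ω ∂μ := by rw [hcXb, ← hSeq]
  have hdiff : cX - cXb = (1 / β) * ∫ ω in S, (X ω - Xb ω) ∂μ := by
    rw [hcX, hcXb', ← mul_sub,
      integral_sub hXint.restrict hXbint.restrict]
  have hint_diff : Integrable (fun ω => X ω - Xb ω) (μ.restrict S) :=
    hXint.restrict.sub hXbint.restrict
  have hint_pow : Integrable (fun ω => |X ω| ^ p / b ^ (p - 1)) μ := hmom_int.div_const _
  have hI1 : ∫ ω in S, (X ω - Xb ω) ∂μ ≤ ∫ ω in S, |X ω| ^ p / b ^ (p - 1) ∂μ :=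
    setIntegral_mono_on hint_diff hint_pow.restrict hSmeas hptub
  have hI2 : ∫ ω in S, |X ω| ^ p / b ^ (p - 1) ∂μ ≤ ∫ ω, |X ω| ^ p / b ^ (p - 1) ∂μ :=
    setIntegral_le_integral hint_pow
      (Filter.Eventually.of_forall fun ω => by positivity)
  have hI3 : ∫ ω, |X ω| ^ p / b ^ (p - 1) ∂μ ≤ B / b ^ (p - 1) := by
    rw [integral_div]
    gcongr
  have hI0 : 0 ≤ ∫ ω in S, (X ω - Xb ω) ∂μ :=
    setIntegral_nonneg hSmeas (fun ω hω => sub_nonneg.mpr (hptlb ω hω))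
  have hbias : |cX - cXb| ≤ Δ / 2 := by
    rw [hdiff, abs_of_nonneg (by positivity)]
    have : (1 / β) * ∫ ω in S, (X ω - Xb ω) ∂μ ≤ (1 / β) * (B / b ^ (p - 1)) := by
      apply mul_le_mul_of_nonneg_left (le_trans hI1 (le_trans hI2 hI3)) (by positivity)
    calc (1 / β) * ∫ ω in S, (X ω - Xb ω) ∂μ ≤ (1 / β) * (B / b ^ (p - 1)) := this
      _ = B / (β * b ^ (p - 1)) := by field_simp
      _ ≤ Δ / 2 := hbias_num
  refine le_trans (measure_mono ?_) hconc
  intro ω' hω'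
  simp only [Set.mem_setOf_eq] at hω' ⊢
  have h1 : |cX - chat ω'| - |cXb - chat ω'| ≤ |cX - cXb| := by
    have := abs_sub_abs_le_abs_sub (cX - chat ω') (cXb - chat ω')
    simpa using this
  linarith
end
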